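/- Let d ≥ 3, let I = I_3(G) ⊆ ℂ[m_0,…,m_d], and let x ∈ ℂ^{d+1} be a nonzero point at which every 3×3 minor of G vanishes. Let J(x) be the Jacobian matrix whose rows are indexed by the 3-element subsets {i < j < k} of the column set {1,…,d}, whose columns are indexed by l = 0,…,d, and whose ({i,j,k}, l) entry is the partial derivative with respect to m_l of the 3×3 minor of G on columns i,j,k, evaluated at x. Then the rank of J(x) over ℂ is strictly less than d−2 if and only if either x_0 = x_1 = ⋯ = x_{d−1} = 0 or x_1 = x_2 = ⋯ = x_d = 0. (Equivalently: the singular locus of the projective gamma moment variety M_d^Γ ⊆ ℙ^d consists of the two points defined by m_0 = ⋯ = m_{d−1} = 0 and m_1 = ⋯ = m_d = 0.) -/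
import Mathlib

open MvPolynomial

/-- The `3 × d` matrix `G` of the gamma moment variety: its `c`-th column, for `1 ≤ c ≤ d`,
is `((c-1)·m_{c-1}, m_{c-1}, m_c)ᵀ`.  Columns are indexed by `Fin d`, with `c : Fin d`
corresponding to the paper's column `c + 1`. -/
noncomputable def gammaMatrix (d : ℕ) :
    Matrix (Fin 3) (Fin d) (MvPolynomial (Fin (d + 1)) ℂ) :=
  Matrix.of fun r c =>
    ![C (c.val : ℂ) * X ⟨c.val, by have := c.isLt; omega⟩,
      X ⟨c.val, by have := c.isLt; omega⟩,
      X ⟨c.val + 1, by have := c.isLt; omega⟩] r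

/-- The ideal `I₃(G)` generated by all `3 × 3` minors of `G`, i.e. determinants of
submatrices obtained by choosing `3` of the `d` columns. -/
noncomputable def gammaIdeal (d : ℕ) : Ideal (MvPolynomial (Fin (d + 1)) ℂ) :=
  Ideal.span
    { p | ∃ s : Fin 3 → Fin d, StrictMono s ∧ p = ((gammaMatrix d).submatrix id s).det }

namespace GammaAux

lemma minor_eq (d : ℕ) (s : Fin 3 → Fin d) :
    ((gammaMatrix d).submatrix id s).det =
      C (((s 0).val : ℂ) - (s 1).val) *
          (X ⟨(s 0).val, by omega⟩ * X ⟨(s 1).val, by omega⟩ * X ⟨(s 2).val + 1, by omega⟩)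
      + C (((s 2).val : ℂ) - (s 0).val) *
          (X ⟨(s 0).val, by omega⟩ * X ⟨(s 1).val + 1, by omega⟩ * X ⟨(s 2).val, by omega⟩)
      + C (((s 1).val : ℂ) - (s 2).val) *
          (X ⟨(s 0).val + 1, by omega⟩ * X ⟨(s 1).val, by omega⟩ * X ⟨(s 2).val, by omega⟩) := by
  rw [Matrix.det_fin_three]
  simp [gammaMatrix, Matrix.submatrix, map_sub]
  ring

lemma eval_det_tri (d : ℕ) (x : Fin (d + 1) → ℂ) (pa pb pc : ℕ)
    (ha : pa < d) (hb : pb < d) (hc : pc < d) :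
    eval x (((gammaMatrix d).submatrix id ![⟨pa, ha⟩, ⟨pb, hb⟩, ⟨pc, hc⟩]).det) =
      ((pa : ℂ) - pb) * (x ⟨pa, by omega⟩ * x ⟨pb, by omega⟩ * x ⟨pc + 1, by omega⟩)
      + ((pc : ℂ) - pa) * (x ⟨pa, by omega⟩ * x ⟨pb + 1, by omega⟩ * x ⟨pc, by omega⟩)
      + ((pb : ℂ) - pc) * (x ⟨pa + 1, by omega⟩ * x ⟨pb, by omega⟩ * x ⟨pc, by omega⟩) := by
  rw [minor_eq]; simp

lemma eval_pderiv_mono (d : ℕ) (x : Fin (d+1) → ℂ) (l a b c : Fin (d+1)) (t : ℂ) :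
    eval x (pderiv l (C t * (X a * X b * X c))) =
      t * ((if l.val = a.val then 1 else 0) * x b * x c
         + x a * (if l.val = b.val then 1 else 0) * x c
         + x a * x b * (if l.val = c.val then 1 else 0)) := by
  have h : ∀ u : Fin (d+1), (if l.val = u.val then (1:ℂ) else 0) = (if l = u then 1 else 0) := by
    intro u; simp [Fin.ext_iff]
  rw [h, h, h]
  simp only [pderiv_mul, pderiv_X, pderiv_C, Pi.single_apply, map_add, _root_.map_mul, eval_C,
    eval_X, apply_ite (eval x), _root_.map_one, _root_.map_zero, zero_mul, mul_zero, zero_add,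
    add_zero, mul_ite, ite_mul, one_mul, mul_one, eq_comm]
  split_ifs <;> ring

lemma eval_pderiv_det (d : ℕ) (x : Fin (d + 1) → ℂ) (s : Fin 3 → Fin d) (l : Fin (d + 1)) :
    eval x (pderiv l (((gammaMatrix d).submatrix id s).det)) =
      (((s 0).val : ℂ) - (s 1).val) *
        ((if l.val = (s 0).val then 1 else 0) * x ⟨(s 1).val, by omega⟩ * x ⟨(s 2).val + 1, by omega⟩
         + x ⟨(s 0).val, by omega⟩ * (if l.val = (s 1).val then 1 else 0) * x ⟨(s 2).val + 1, by omega⟩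
         + x ⟨(s 0).val, by omega⟩ * x ⟨(s 1).val, by omega⟩ * (if l.val = (s 2).val + 1 then 1 else 0))
    + (((s 2).val : ℂ) - (s 0).val) *
        ((if l.val = (s 0).val then 1 else 0) * x ⟨(s 1).val + 1, by omega⟩ * x ⟨(s 2).val, by omega⟩
         + x ⟨(s 0).val, by omega⟩ * (if l.val = (s 1).val + 1 then 1 else 0) * x ⟨(s 2).val, by omega⟩
         + x ⟨(s 0).val, by omega⟩ * x ⟨(s 1).val + 1, by omega⟩ * (if l.val = (s 2).val then 1 else 0))
    + (((s 1).val : ℂ) - (s 2).val) *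
        ((if l.val = (s 0).val + 1 then 1 else 0) * x ⟨(s 1).val, by omega⟩ * x ⟨(s 2).val, by omega⟩
         + x ⟨(s 0).val + 1, by omega⟩ * (if l.val = (s 1).val then 1 else 0) * x ⟨(s 2).val, by omega⟩
         + x ⟨(s 0).val + 1, by omega⟩ * x ⟨(s 1).val, by omega⟩ * (if l.val = (s 2).val then 1 else 0)) := by
  rw [minor_eq, map_add, map_add, map_add, map_add,
    eval_pderiv_mono, eval_pderiv_mono, eval_pderiv_mono]

lemma eval_pderiv_tri (d : ℕ) (x : Fin (d + 1) → ℂ) (pa pb pc : ℕ)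
    (ha : pa < d) (hb : pb < d) (hc : pc < d) (l : Fin (d + 1)) :
    eval x (pderiv l (((gammaMatrix d).submatrix id ![⟨pa, ha⟩, ⟨pb, hb⟩, ⟨pc, hc⟩]).det)) =
      ((pa : ℂ) - pb) *
        ((if l.val = pa then 1 else 0) * x ⟨pb, by omega⟩ * x ⟨pc + 1, by omega⟩
         + x ⟨pa, by omega⟩ * (if l.val = pb then 1 else 0) * x ⟨pc + 1, by omega⟩
         + x ⟨pa, by omega⟩ * x ⟨pb, by omega⟩ * (if l.val = pc + 1 then 1 else 0))
    + ((pc : ℂ) - pa) *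
        ((if l.val = pa then 1 else 0) * x ⟨pb + 1, by omega⟩ * x ⟨pc, by omega⟩
         + x ⟨pa, by omega⟩ * (if l.val = pb + 1 then 1 else 0) * x ⟨pc, by omega⟩
         + x ⟨pa, by omega⟩ * x ⟨pb + 1, by omega⟩ * (if l.val = pc then 1 else 0))
    + ((pb : ℂ) - pc) *
        ((if l.val = pa + 1 then 1 else 0) * x ⟨pb, by omega⟩ * x ⟨pc, by omega⟩
         + x ⟨pa + 1, by omega⟩ * (if l.val = pb then 1 else 0) * x ⟨pc, by omega⟩
         + x ⟨pa + 1, by omega⟩ * x ⟨pb, by omega⟩ * (if l.val = pc then 1 else 0)) := by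
  exact eval_pderiv_det d x ![⟨pa, ha⟩, ⟨pb, hb⟩, ⟨pc, hc⟩] l

lemma strictMono_tri {d : ℕ} (a b c : Fin d) (h1 : a < b) (h2 : b < c) :
    StrictMono ![a, b, c] := by
  intro i j hij
  fin_cases i <;> fin_cases j <;>
    simp_all [Matrix.cons_val_zero, Matrix.cons_val_one, Matrix.head_cons] <;>
    first
      | exact h1 | exact h2 | exact lt_trans h1 h2 | skip

lemma rank_lower_bound {m n : Type*} [Fintype m] [Fintype n] [DecidableEq n]
    (A : Matrix m n ℂ) (N : ℕ) (ι : Fin N → m) (κ : Fin N → n)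
    (htri : ∀ i j : Fin N, i < j → A (ι i) (κ j) = 0)
    (hdiag : ∀ i : Fin N, A (ι i) (κ i) ≠ 0) : N ≤ A.rank := by
  classical
  have hv : LinearIndependent ℂ (fun j : Fin N => (Matrix.transpose A (κ j))) := by
    rw [Fintype.linearIndependent_iff]
    intro g hg
    suffices H : ∀ k : ℕ, ∀ j : Fin N, (j : ℕ) = k → g j = 0 by exact fun j => H j j rfl
    intro k
    induction k using Nat.strong_induction_on with
    | _ k ih =>
      intro j hj
      have hrow := congrFun hg (ι j)
      simp only [Finset.sum_apply, Pi.smul_apply, Matrix.transpose_apply, smul_eq_mul,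
        Pi.zero_apply] at hrow
      rw [Finset.sum_eq_single j] at hrow
      · rcases mul_eq_zero.mp hrow with h | h
        · exact h
        · exact absurd h (hdiag j)
      · intro i _ hij
        rcases lt_or_gt_of_ne hij with h | h
        · rw [ih i (by omega) i rfl, zero_mul]
        · rw [htri j i h, mul_zero]
      · intro h; exact absurd (Finset.mem_univ j) h
  have h1 : Submodule.span ℂ (Set.range fun j : Fin N => Matrix.transpose A (κ j)) ≤
      Submodule.span ℂ (Set.range (Matrix.transpose A)) := by
    apply Submodule.span_mono
    rintro _ ⟨j, rfl⟩; exact ⟨κ j, rfl⟩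
  have h2 := finrank_span_eq_card hv
  rw [Matrix.rank_eq_finrank_span_cols]
  calc N = Fintype.card (Fin N) := (Fintype.card_fin N).symm
    _ = _ := h2.symm
    _ ≤ _ := Submodule.finrank_mono h1

end GammaAux

open GammaAux

set_option maxHeartbeats 1000000 in
/-- Singular locus of the gamma moment variety via the Jacobian criterion:
for a nonzero point `x` of the affine cone, the Jacobian matrix of the `3 × 3` minors of
`G` has rank `< d - 2` at `x` if and only if `x₀ = ⋯ = x_{d-1} = 0` or
`x₁ = ⋯ = x_d = 0` (the two singular points). -/
theorem gamma_singularLocus (d : ℕ) (hd : 3 ≤ d) (x : Fin (d + 1) → ℂ) (hx : x ≠ 0)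
    (hvan : ∀ s : Fin 3 → Fin d, StrictMono s →
      eval x (((gammaMatrix d).submatrix id s).det) = 0) :
    (Matrix.of fun (s : {s : Fin 3 → Fin d // StrictMono s}) (l : Fin (d + 1)) =>
        eval x (pderiv l (((gammaMatrix d).submatrix id s.val).det))).rank < d - 2 ↔
      ((∀ i : Fin (d + 1), i.val ≤ d - 1 → x i = 0) ∨
        (∀ i : Fin (d + 1), 1 ≤ i.val → x i = 0)) := by
  classical
  haveI : Fintype {s : Fin 3 → Fin d // StrictMono s} := Fintype.ofFinite _
  constructor
  · intro hrank
    by_contra hR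
    push_neg at hR
    obtain ⟨⟨a, ha1, ha2⟩, ⟨b, hb1, hb2⟩⟩ := hR
    suffices h : d - 2 ≤ (Matrix.of fun (s : {s : Fin 3 → Fin d // StrictMono s})
        (l : Fin (d + 1)) =>
        eval x (pderiv l (((gammaMatrix d).submatrix id s.val).det))).rank by omega
    rcases eq_or_ne (x ⟨0, by omega⟩) 0 with h0 | h0
    · -- x₀ = 0 : support concentrated at one index e+1 ≤ d-1 (plus possibly d)
      have hPex : ∃ n : ℕ, ∃ hn : n < d + 1, n ≤ d - 1 ∧ x ⟨n, hn⟩ ≠ 0 :=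
        ⟨a.val, a.isLt, ha1, by rwa [Fin.eta]⟩
      have hNlt := (Nat.find_spec hPex).fst
      obtain ⟨hNle, hNx⟩ := (Nat.find_spec hPex).snd
      set N := Nat.find hPex with hNdef
      have hN1 : 1 ≤ N := by
        by_contra hco
        push_neg at hco
        have he0 : (⟨N, hNlt⟩ : Fin (d+1)) = ⟨0, by omega⟩ := by
          simp only [Fin.mk.injEq]; omega
        rw [he0] at hNx
        exact hNx h0
      set e := N - 1 with hedef
      have heN : N = e + 1 := by omega
      have hee : e + 1 ≤ d - 1 := by omega
      have hmin : ∀ c : ℕ, ∀ hc : c < d + 1, c < e + 1 → x ⟨c, hc⟩ = 0 := by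
        intro c hc hce
        by_contra hne
        exact Nat.find_min hPex (by omega) ⟨hc, by omega, hne⟩
      have hxe : x ⟨e + 1, by omega⟩ ≠ 0 := by
        have he0 : (⟨N, hNlt⟩ : Fin (d+1)) = ⟨e + 1, by omega⟩ := by
          simp only [Fin.mk.injEq]; omega
        rwa [he0] at hNx
      have hza : ∀ c : ℕ, ∀ hc : c < d + 1, e + 1 < c → c ≤ d - 1 → x ⟨c, hc⟩ = 0 := by
        intro c hc h1c h2c
        have hv := hvan ![⟨e, by omega⟩, ⟨e+1, by omega⟩, ⟨c, by omega⟩]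
          (strictMono_tri _ _ _ (by simp [Fin.lt_def]) (by simp [Fin.lt_def]; omega))
        rw [eval_det_tri] at hv
        have z1 : x ⟨e, by omega⟩ = 0 := hmin e (by omega) (by omega)
        have hcast : ((e + 1 : ℕ) : ℂ) - (c : ℕ) ≠ 0 := by
          rw [sub_ne_zero]
          exact_mod_cast (by omega : (e + 1 : ℕ) ≠ c)
        simp only [z1, mul_zero, zero_mul, add_zero, zero_add] at hv
        rcases mul_eq_zero.mp hv with h | h
        · exact absurd h hcast
        rcases mul_eq_zero.mp h with h' | h'
        · rcases mul_eq_zero.mp h' with h'' | h''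
          · exact absurd h'' hxe
          · exact absurd h'' hxe
        · exact h'
      refine rank_lower_bound _ (d-2)
        (fun j => if hj : j.val < e then
            ⟨![⟨j.val, by omega⟩, ⟨e, by omega⟩, ⟨e+1, by omega⟩],
              strictMono_tri _ _ _ (by simp [Fin.lt_def]; omega) (by simp [Fin.lt_def])⟩
          else
            ⟨![⟨e, by omega⟩, ⟨e+1, by omega⟩, ⟨j.val+2, by have := j.isLt; omega⟩],
              strictMono_tri _ _ _ (by simp [Fin.lt_def])
                (by simp [Fin.lt_def]; omega)⟩)
        (fun j => if j.val < e then (⟨j.val, by omega⟩ : Fin (d+1))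
          else ⟨j.val+2, by have := j.isLt; omega⟩) ?_ ?_
      · intro i j hij
        have hij' : i.val < j.val := hij
        by_cases hi : i.val < e <;> by_cases hj : j.val < e
        · simp only [Matrix.of_apply, dif_pos hi, if_pos hj]
          rw [eval_pderiv_tri]
          have zi : x ⟨i.val, by omega⟩ = 0 := hmin _ _ (by omega)
          have zi1 : x ⟨i.val + 1, by omega⟩ = 0 := hmin _ _ (by omega)
          have ze : x ⟨e, by omega⟩ = 0 := hmin _ _ (by omega)
          simp only [Fin.val_mk, zi, zi1, ze, mul_zero, zero_mul, add_zero, zero_add]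
          rw [if_neg (show ¬(j.val = i.val) by omega)]
          ring
        · simp only [Matrix.of_apply, dif_pos hi, if_neg hj]
          rw [eval_pderiv_tri]
          have zi : x ⟨i.val, by omega⟩ = 0 := hmin _ _ (by omega)
          have zi1 : x ⟨i.val + 1, by omega⟩ = 0 := hmin _ _ (by omega)
          have ze : x ⟨e, by omega⟩ = 0 := hmin _ _ (by omega)
          simp only [Fin.val_mk, zi, zi1, ze, mul_zero, zero_mul, add_zero, zero_add]
          rw [if_neg (show ¬(j.val + 2 = i.val) by omega)]
          ring
        · exfalso; omega
        · simp only [Matrix.of_apply, dif_neg hi, if_neg hj]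
          rw [eval_pderiv_tri]
          have ze : x ⟨e, by omega⟩ = 0 := hmin _ _ (by omega)
          simp only [Fin.val_mk, ze, mul_zero, zero_mul, add_zero, zero_add]
          rw [if_neg (show ¬(j.val + 2 = e) by omega),
            if_neg (show ¬(j.val + 2 = e + 1) by omega),
            if_neg (show ¬(j.val + 2 = i.val + 2) by omega)]
          ring
      · intro i
        by_cases hi : i.val < e
        · simp only [Matrix.of_apply, dif_pos hi, if_pos hi]
          rw [eval_pderiv_tri]
          have zi : x ⟨i.val, by omega⟩ = 0 := hmin _ _ (by omega)
          have zi1 : x ⟨i.val + 1, by omega⟩ = 0 := hmin _ _ (by omega)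
          have ze : x ⟨e, by omega⟩ = 0 := hmin _ _ (by omega)
          simp only [Fin.val_mk, zi, zi1, ze, mul_zero, zero_mul, add_zero, zero_add, if_pos rfl]
          have hcast : ((e + 1 : ℕ) : ℂ) - (i.val : ℕ) ≠ 0 := by
            rw [sub_ne_zero]
            exact_mod_cast (by omega : (e + 1 : ℕ) ≠ i.val)
          simpa using mul_ne_zero hcast (mul_ne_zero hxe hxe)
        · simp only [Matrix.of_apply, dif_neg hi, if_neg hi]
          rw [eval_pderiv_tri]
          have ze : x ⟨e, by omega⟩ = 0 := hmin _ _ (by omega)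
          simp only [Fin.val_mk, ze, mul_zero, zero_mul, add_zero, zero_add]
          rw [if_neg (show ¬(i.val + 2 = e) by omega),
            if_neg (show ¬(i.val + 2 = e + 1) by omega)]
          simp only [if_true]
          have hcast : ((e + 1 : ℕ) : ℂ) - ((i.val + 2 : ℕ) : ℂ) ≠ 0 := by
            rw [sub_ne_zero]
            exact_mod_cast (by omega : (e + 1 : ℕ) ≠ i.val + 2)
          simpa using mul_ne_zero hcast (mul_ne_zero hxe hxe)
    · rcases eq_or_ne (x ⟨1, by omega⟩) 0 with h1 | h1
      · -- x₀ ≠ 0, x₁ = 0: then x is supported on {0, d} and x_d ≠ 0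
        have hz2 : ∀ c : ℕ, ∀ hc : c < d + 1, 1 ≤ c → c ≤ d - 1 → x ⟨c, hc⟩ = 0 := by
          intro c
          induction c using Nat.strong_induction_on with
          | _ c ih =>
            intro hc hc1 hc2
            match c, hc1 with
            | 1, _ => exact h1
            | (k+2), _ =>
              have hv := hvan ![⟨0, by omega⟩, ⟨k+1, by omega⟩, ⟨k+2, by omega⟩]
                (strictMono_tri _ _ _ (by simp [Fin.lt_def]) (by simp [Fin.lt_def]))
              rw [eval_det_tri] at hv
              have z1 : x ⟨k+1, by omega⟩ = 0 := ih (k+1) (by omega) (by omega) (by omega) (by omega)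
              have hcast : ((k + 2 : ℕ) : ℂ) - ((0:ℕ) : ℂ) ≠ 0 := by
                rw [sub_ne_zero]
                exact_mod_cast (by omega : (k + 2 : ℕ) ≠ 0)
              simp only [z1, mul_zero, zero_mul, add_zero, zero_add] at hv
              rcases mul_eq_zero.mp hv with h | h
              · exact absurd h hcast
              rcases mul_eq_zero.mp h with h' | h'
              · rcases mul_eq_zero.mp h' with h'' | h''
                · exact absurd h'' h0
                · exact h''
              · exact h'
        have hxd : x ⟨d - 1 + 1, by omega⟩ ≠ 0 := by
          have hbd : b.val = d := by
            by_contra hbd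
            exact hb2 (by
              have : b = ⟨b.val, b.isLt⟩ := by simp [Fin.eta]
              rw [this]
              exact hz2 b.val b.isLt hb1 (by omega))
          have : b = ⟨d - 1 + 1, by omega⟩ := by simp only [Fin.ext_iff, Fin.val_mk]; omega
          rwa [this] at hb2
        refine rank_lower_bound _ (d-2)
          (fun i => ⟨![⟨0, by omega⟩, ⟨i.val+1, by have := i.isLt; omega⟩, ⟨d-1, by omega⟩],
            strictMono_tri _ _ _ (by simp [Fin.lt_def]) (by simp [Fin.lt_def]; have := i.isLt; omega)⟩)
          (fun i => ⟨i.val + 1, by have := i.isLt; omega⟩) ?_ ?_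
        · intro i j hij
          have hij' : i.val < j.val := hij
          simp only [Matrix.of_apply]
          rw [eval_pderiv_tri]
          have z1 : x ⟨i.val + 1, by omega⟩ = 0 := hz2 _ _ (by omega) (by have := i.isLt; omega)
          have z2 : x ⟨i.val + 1 + 1, by omega⟩ = 0 := hz2 _ _ (by omega) (by have := i.isLt; omega)
          have z3 : x ⟨d - 1, by omega⟩ = 0 := hz2 _ _ (by omega) (by omega)
          have z4 : x ⟨0 + 1, by omega⟩ = 0 := h1
          simp only [Fin.val_mk, z1, z2, z3, z4, mul_zero, zero_mul, add_zero, zero_add]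
          rw [if_neg (show ¬(j.val + 1 = i.val + 1) by omega)]
          ring
        · intro i
          simp only [Matrix.of_apply]
          rw [eval_pderiv_tri]
          have z1 : x ⟨i.val + 1, by omega⟩ = 0 := hz2 _ _ (by omega) (by have := i.isLt; omega)
          have z2 : x ⟨i.val + 1 + 1, by omega⟩ = 0 := hz2 _ _ (by omega) (by have := i.isLt; omega)
          have z3 : x ⟨d - 1, by omega⟩ = 0 := hz2 _ _ (by omega) (by omega)
          have z4 : x ⟨0 + 1, by omega⟩ = 0 := h1
          simp only [Fin.val_mk, z1, z2, z3, z4, mul_zero, zero_mul, add_zero, zero_add,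
            if_pos rfl]
          have hcast : ((0 : ℕ) : ℂ) - ((i.val + 1 : ℕ) : ℂ) ≠ 0 := by
            rw [sub_ne_zero]
            exact_mod_cast (by omega : (0 : ℕ) ≠ i.val + 1)
          simpa using mul_ne_zero hcast (mul_ne_zero h0 hxd)
      · -- x₀ ≠ 0 and x₁ ≠ 0
        refine rank_lower_bound _ (d-2)
          (fun i => ⟨![⟨0, by omega⟩, ⟨1, by omega⟩, ⟨i.val+2, by have := i.isLt; omega⟩],
            strictMono_tri _ _ _ (by simp [Fin.lt_def]) (by simp [Fin.lt_def])⟩)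
          (fun i => ⟨i.val + 3, by have := i.isLt; omega⟩) ?_ ?_
        · intro i j hij
          have hij' : i.val < j.val := hij
          simp only [Matrix.of_apply]
          rw [eval_pderiv_tri]
          simp only [Fin.val_mk]
          rw [if_neg (show ¬(j.val+3 = 0) by omega), if_neg (show ¬(j.val+3 = 1) by omega),
            if_neg (show ¬(j.val+3 = i.val+2+1) by omega), if_neg (show ¬(j.val+3 = 1+1) by omega),
            if_neg (show ¬(j.val+3 = i.val+2) by omega)]
          ring
        · intro i
          simp only [Matrix.of_apply]
          rw [eval_pderiv_tri]
          simp only [Fin.val_mk, if_true]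
          rw [if_neg (show ¬(i.val+3 = 0) by omega), if_neg (show ¬(i.val+3 = 1) by omega),
            if_neg (show ¬(i.val+3 = 1+1) by omega), if_neg (show ¬(i.val+3 = i.val+2) by omega)]
          simp only [Nat.cast_zero, Nat.cast_one, mul_zero, zero_mul, mul_one, one_mul,
            add_zero, zero_add, zero_sub, neg_mul, sub_zero]
          simpa using mul_ne_zero h0 h1
  · intro hR
    have hJ : (Matrix.of fun (s : {s : Fin 3 → Fin d // StrictMono s}) (l : Fin (d + 1)) =>
        eval x (pderiv l (((gammaMatrix d).submatrix id s.val).det))) = 0 := by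
      ext s l
      rw [Matrix.of_apply, Matrix.zero_apply, eval_pderiv_det]
      have hs01 : (s.val 0).val < (s.val 1).val := s.prop (show (0:Fin 3) < 1 by decide)
      have hs12 : (s.val 1).val < (s.val 2).val := s.prop (show (1:Fin 3) < 2 by decide)
      rcases hR with hR | hR
      · have z0 : x ⟨(s.val 0).val, by omega⟩ = 0 := hR _ (by simp only [Fin.mk.injEq]; omega)
        have z1 : x ⟨(s.val 1).val, by omega⟩ = 0 := hR _ (by simp only [Fin.mk.injEq]; omega)
        have z2 : x ⟨(s.val 2).val, by omega⟩ = 0 := hR _ (by simp only [Fin.mk.injEq]; omega)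
        have z3 : x ⟨(s.val 0).val + 1, by omega⟩ = 0 := hR _ (by simp only [Fin.mk.injEq]; omega)
        have z4 : x ⟨(s.val 1).val + 1, by omega⟩ = 0 := hR _ (by simp only [Fin.mk.injEq]; omega)
        simp [z0, z1, z2, z3, z4]
      · have z1 : x ⟨(s.val 1).val, by omega⟩ = 0 := hR _ (by simp only [Fin.mk.injEq]; omega)
        have z2 : x ⟨(s.val 2).val, by omega⟩ = 0 := hR _ (by simp only [Fin.mk.injEq]; omega)
        have z3 : x ⟨(s.val 0).val + 1, by omega⟩ = 0 := hR _ (by simp only [Fin.mk.injEq]; omega)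
        have z4 : x ⟨(s.val 1).val + 1, by omega⟩ = 0 := hR _ (by simp only [Fin.mk.injEq]; omega)
        have z5 : x ⟨(s.val 2).val + 1, by omega⟩ = 0 := hR _ (by simp only [Fin.mk.injEq]; omega)
        simp [z1, z2, z3, z4, z5]
    rw [hJ, Matrix.rank_zero]
    omega
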